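/- arXiv:2408.07890 — 2 statements merged into one kernel-verified Lean document; each statement's English description precedes it below -/
import Mathlib

section
/- Let G* be an MPDAG with B-components G*₁,…,G*ₖ over vertex sets V₁,…,Vₖ. Then for any choice of DAGs G₁∈[G*₁],…,Gₖ∈[G*ₖ], there exists a DAG G∈[G*] whose induced subgraph over Vᵢ equals Gᵢ for every i. -/
/-! ## Basic notions for directed graphs (DAGs) given by an edge relation `E`. -/

/-- A directed graph (edge relation `E`) is acyclic: no directed cycles. -/
def Acyclic {V : Type*} (E : V → V → Prop) : Prop := ∀ x, ¬ Relation.TransGen E x x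

/-- Two nodes are adjacent if there is an edge between them in either direction. -/
def adjD {V : Type*} (E : V → V → Prop) (a b : V) : Prop := E a b ∨ E b a

/-- `p` is a path (in the skeleton) from `X` to `Y`: consecutive nodes are adjacent and
nodes are pairwise distinct. -/
def IsPath {V : Type*} (E : V → V → Prop) (p : List V) (X Y : V) : Prop :=
  p.head? = some X ∧ p.getLast? = some Y ∧ p.Chain' (adjD E) ∧ p.Nodup

/-- A path is d-connecting (open) given `S` if every collider on it is an ancestor
of some node of `S` and no non-collider on it lies in `S`. -/
def dConnecting {V : Type*} (E : V → V → Prop) (S : Set V) (p : List V) : Prop :=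
  ∀ (i : ℕ) a b c, p[i]? = some a → p[i+1]? = some b → p[i+2]? = some c →
    ((E a b ∧ E c b) → ∃ s ∈ S, Relation.ReflTransGen E b s) ∧
    (¬ (E a b ∧ E c b) → b ∉ S)

/-- `X` and `Y` are d-separated by `S` if every path between them is blocked by `S`. -/
def dSeparated {V : Type*} (E : V → V → Prop) (S : Set V) (X Y : V) : Prop :=
  ∀ p : List V, IsPath E p X Y → ¬ dConnecting E S p

/-- A v-structure `a → b ← c` with `a`, `c` non-adjacent. -/
def vStructD {V : Type*} (E : V → V → Prop) (a b c : V) : Prop :=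
  E a b ∧ E c b ∧ a ≠ c ∧ ¬ adjD E a c

/-! ## Partially directed graphs (PDAGs / MPDAGs). -/

/-- A partially directed graph: directed edges `dir` and undirected edges `undir`. -/
structure PDAG (V : Type*) where
  dir : V → V → Prop
  undir : V → V → Prop
  undir_symm : ∀ a b, undir a b → undir b a
  dir_asymm : ∀ a b, dir a b → ¬ dir b a
  disj : ∀ a b, undir a b → ¬ dir a b

namespace PDAG

variable {V : Type*} (G : PDAG V)

/-- Adjacency in a partially directed graph. -/
def adj (a b : V) : Prop := G.dir a b ∨ G.dir b a ∨ G.undir a b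

/-- A v-structure `a → b ← c` in a PDAG, with `a, c` non-adjacent. -/
def vStruct (a b c : V) : Prop := G.dir a b ∧ G.dir c b ∧ a ≠ c ∧ ¬ G.adj a c

/-- Parents of `X`. -/
def pa (X : V) : Set V := {z | G.dir z X}

/-- Children of `X`. -/
def ch (X : V) : Set V := {z | G.dir X z}

/-- Siblings (undirected neighbours) of `X`. -/
def sib (X : V) : Set V := {z | G.undir X z}

/-- A DAG `E` is represented by the (M)PDAG `G` (i.e. `E ∈ [G]`): it is acyclic,
has the same skeleton and the same v-structures as `G`, and preserves every
directed edge of `G`. -/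
def Represents (E : V → V → Prop) : Prop :=
  Acyclic E ∧ (∀ a b, adjD E a b ↔ G.adj a b) ∧
  (∀ a b, G.dir a b → E a b) ∧
  (∀ a b c, vStructD E a b c ↔ G.vStruct a b c)

/-- `G` is an MPDAG: its represented class is non-empty, an edge is directed in
`G` iff it has that orientation in all DAGs of the class, and every undirected
edge takes both orientations across the class. -/
def IsMPDAG : Prop :=
  (∃ E, G.Represents E) ∧
  (∀ a b, G.dir a b ↔ (G.adj a b ∧ ∀ E, G.Represents E → E a b)) ∧
  (∀ a b, G.undir a b → ∃ E, G.Represents E ∧ E a b)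

/-- Induced sub-PDAG on a vertex set `W`. -/
def induce (W : Set V) : PDAG V where
  dir a b := a ∈ W ∧ b ∈ W ∧ G.dir a b
  undir a b := a ∈ W ∧ b ∈ W ∧ G.undir a b
  undir_symm a b h := ⟨h.2.1, h.1, G.undir_symm a b h.2.2⟩
  dir_asymm a b h hb := G.dir_asymm a b h.2.2 hb.2.2
  disj a b h hd := G.disj a b h.2.2 hd.2.2

end PDAG

/-- A path in a PDAG: consecutive nodes adjacent, pairwise distinct nodes. -/
def IsPDAGPath {V : Type*} (G : PDAG V) (p : List V) (X Y : V) : Prop :=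
  p.head? = some X ∧ p.getLast? = some Y ∧ p.Chain' G.adj ∧ p.Nodup

/-- A path is b-possibly causal: no edge `V_j → V_i` in `G` for `i < j` along it. -/
def bPossiblyCausal {V : Type*} (G : PDAG V) (p : List V) : Prop :=
  ∀ (i j : ℕ) a b, i < j → p[i]? = some a → p[j]? = some b → ¬ G.dir b a

/-- A path is chordless: non-consecutive nodes are non-adjacent. -/
def Chordless {V : Type*} (G : PDAG V) (p : List V) : Prop :=
  ∀ (i j : ℕ) a b, i + 1 < j → p[i]? = some a → p[j]? = some b → ¬ G.adj a b

/-- Critical set of `X` with respect to `Y` in `G`: the adjacent vertices of `X`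
lying on some chordless b-possibly causal path from `X` to `Y`. -/
def criticalSet {V : Type*} (G : PDAG V) (X Y : V) : Set V :=
  {c | ∃ p : List V, IsPDAGPath G p X Y ∧ bPossiblyCausal G p ∧ Chordless G p ∧ p[1]? = some c}

/-- A DAG extension of `G`: acyclic, same skeleton, all directed edges of `G`
kept, and no v-structures beyond those of `G`. -/
def ExtendsNoNewV {V : Type*} (G : PDAG V) (E : V → V → Prop) : Prop :=
  Acyclic E ∧ (∀ a b, adjD E a b ↔ G.adj a b) ∧
  (∀ a b, G.dir a b → E a b) ∧
  (∀ a b c, vStructD E a b c → G.vStruct a b c)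

/-- An acyclic orientation of `G` extending its directed edges. -/
def ExtendsDir {V : Type*} (G : PDAG V) (E : V → V → Prop) : Prop :=
  Acyclic E ∧ (∀ a b, adjD E a b ↔ G.adj a b) ∧ (∀ a b, G.dir a b → E a b)

/-- `W` is (the vertex set of) a B-component of `G`: an equivalence class of the
undirected-connectivity relation. -/
def IsBComponent {V : Type*} (G : PDAG V) (W : Set V) : Prop :=
  ∃ a, W = {b | Relation.ReflTransGen G.undir a b}

/-- Every non-endpoint node of `p` is of definite status in `M`: a definite
collider or a definite non-collider. -/
def DefiniteStatus {V : Type*} (M : PDAG V) (p : List V) : Prop :=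
  ∀ (i : ℕ) a b c, p[i]? = some a → p[i+1]? = some b → p[i+2]? = some c →
    (M.dir a b ∧ M.dir c b) ∨ M.dir b a ∨ M.dir b c ∨
    (M.undir a b ∧ M.undir b c ∧ ¬ M.adj a c)

/-!
Glue the orientations: keep every directed edge of `G*` and orient each B-component as
prescribed. Two consequences of the Meek rules in an MPDAG carry the argument: a parent of a
vertex from outside its B-component is a parent of the whole B-component, and hence the
directed edges between B-components induce an acyclic relation on the B-components. A cycle
of the glued graph therefore stays inside one B-component, where the prescribed DAG is
acyclic; and in a v-structure `a → b ← c` of the glued graph with `a`, `b` in one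
B-component, either `c` lies in that B-component too, so the v-structure is one of the
prescribed DAG, or `c` is an outside parent of `b`, hence adjacent to `a`.
-/

open Relation

theorem Acyclic.mono {V : Type*} {r s : V → V → Prop} (h : r ≤ s) (hs : Acyclic s) :
    Acyclic r :=
  fun x hx => hs x (TransGen.mono h _ _ hx)

theorem vStructD.symm {V : Type*} {E : V → V → Prop} {a b c : V} (h : vStructD E a b c) :
    vStructD E c b a :=
  ⟨h.2.1, h.1, h.2.2.1.symm, fun h' => h.2.2.2 h'.symm⟩

theorem acyclic_of_acyclic_map {V ι : Type*} {E : V → V → Prop} (f : V → ι)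
    (hin : ∀ i, Acyclic fun a b => E a b ∧ f a = i ∧ f b = i)
    (hout : Acyclic (Relation.Map (fun a b => E a b ∧ f a ≠ f b) f f)) : Acyclic E := by
  have key : ∀ x y, TransGen E x y →
      (f x = f y ∧ TransGen (fun a b => E a b ∧ f a = f x ∧ f b = f x) x y) ∨
        TransGen (Relation.Map (fun a b => E a b ∧ f a ≠ f b) f f) (f x) (f y) := by
    intro x y h
    induction h with
    | @single y h =>
      by_cases hxy : f x = f y
      · exact Or.inl ⟨hxy, .single ⟨h, rfl, hxy.symm⟩⟩
      · exact Or.inr (.single ⟨x, y, ⟨h, hxy⟩, rfl, rfl⟩)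
    | @tail z y _ hzy ih =>
      by_cases hfzy : f z = f y
      · rcases ih with ⟨hxz, hc⟩ | hc
        · exact Or.inl ⟨hxz.trans hfzy, hc.tail ⟨hzy, hxz.symm, (hxz.trans hfzy).symm⟩⟩
        · exact Or.inr (hfzy ▸ hc)
      · have hstep : Relation.Map (fun a b => E a b ∧ f a ≠ f b) f f (f z) (f y) :=
          ⟨z, y, ⟨hzy, hfzy⟩, rfl, rfl⟩
        rcases ih with ⟨hxz, -⟩ | hc
        · exact Or.inr (.single (hxz ▸ hstep))
        · exact Or.inr (hc.tail hstep)
  intro x hx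
  rcases key x x hx with ⟨-, hc⟩ | hc
  · exact hin (f x) x hc
  · exact hout (f x) hc

namespace PDAG

variable {V : Type*} {G : PDAG V}

instance (G : PDAG V) : Std.Symm G.undir := ⟨G.undir_symm⟩

theorem adj_comm {a b : V} : G.adj a b ↔ G.adj b a := by
  unfold adj
  have := G.undir_symm a b
  have := G.undir_symm b a
  tauto

theorem adj_of_induce_adj {W : Set V} {a b : V} (h : (G.induce W).adj a b) : G.adj a b := by
  rcases h with h | h | h
  exacts [Or.inl h.2.2, Or.inr (Or.inl h.2.2), Or.inr (Or.inr h.2.2)]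

theorem mem_of_induce_adj {W : Set V} {a b : V} (h : (G.induce W).adj a b) : a ∈ W ∧ b ∈ W := by
  rcases h with h | h | h
  exacts [⟨h.1, h.2.1⟩, ⟨h.2.1, h.1⟩, ⟨h.1, h.2.1⟩]

theorem Represents.acyclic_dir {E : V → V → Prop} (hE : G.Represents E) : Acyclic G.dir :=
  hE.1.mono hE.2.2.1

theorem Represents.mem_of_induce {W : Set V} {E : V → V → Prop}
    (hE : (G.induce W).Represents E) {a b : V} (hab : E a b) : a ∈ W ∧ b ∈ W :=
  mem_of_induce_adj ((hE.2.1 a b).1 (Or.inl hab))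

theorem _root_.IsBComponent.reflTransGen_undir_iff {W : Set V} (hW : IsBComponent G W) {a b : V}
    (ha : a ∈ W) : ReflTransGen G.undir a b ↔ b ∈ W := by
  obtain ⟨r, rfl⟩ := hW
  exact ⟨fun hab => ReflTransGen.trans ha hab, fun hb => (symm ha).trans hb⟩

namespace IsMPDAG

theorem adj_of_dir_of_undir (hG : G.IsMPDAG) {a b c : V} (hab : G.dir a b) (hbc : G.undir b c) :
    G.adj a c := by
  by_contra hac
  have hne : a ≠ c := fun h => G.disj c b (G.undir_symm b c hbc) (h ▸ hab)
  obtain ⟨E, hE, hcb⟩ := hG.2.2 c b (G.undir_symm b c hbc)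
  have hv : vStructD E a b c :=
    ⟨hE.2.2.1 a b hab, hcb, hne, fun h => hac ((hE.2.1 a c).1 h)⟩
  exact G.disj c b (G.undir_symm b c hbc) ((hE.2.2.2 a b c).1 hv).2.1

theorem dir_or_undir_of_dir_of_undir (hG : G.IsMPDAG) {a b c : V} (hab : G.dir a b)
    (hbc : G.undir b c) : G.dir a c ∨ G.undir a c := by
  rcases hG.adj_of_dir_of_undir hab hbc with hac | hca | hac
  · exact Or.inl hac
  · obtain ⟨E, hE, hEbc⟩ := hG.2.2 b c hbc
    exact absurd (TransGen.head (hE.2.2.1 c a hca) (.head (hE.2.2.1 a b hab) (.single hEbc)))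
      (hE.1 c)
  · exact Or.inr hac

theorem dir_of_dir_of_reflTransGen_undir (hG : G.IsMPDAG) {a b c : V} (hab : G.dir a b)
    (hba : ¬ ReflTransGen G.undir b a) (hbc : ReflTransGen G.undir b c) : G.dir a c := by
  induction hbc with
  | refl => exact hab
  | @tail d c hbd hdc ih =>
    refine (hG.dir_or_undir_of_dir_of_undir ih hdc).resolve_right fun hac => hba ?_
    exact (hbd.tail hdc).tail (G.undir_symm a c hac)

theorem acyclic_map_dir (hG : G.IsMPDAG) {ι : Type*} {f : V → ι}
    (hf : ∀ a b, f a = f b ↔ ReflTransGen G.undir a b) :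
    Acyclic (Relation.Map (fun a b => G.dir a b ∧ f a ≠ f b) f f) := by
  have hpar : ∀ a b c, G.dir a b → f a ≠ f b → f b = f c → G.dir a c := fun a b c hab hne hbc =>
    hG.dir_of_dir_of_reflTransGen_undir hab (fun h => hne ((hf b a).2 h).symm) ((hf b c).1 hbc)
  have hreach : ∀ i j, TransGen (Relation.Map (fun a b => G.dir a b ∧ f a ≠ f b) f f) i j →
      ∃ a, f a = i ∧ ∀ b, f b = j → TransGen G.dir a b := by
    intro i j h
    induction h with
    | single h =>
      obtain ⟨a, b₀, ⟨hd, hne⟩, rfl, rfl⟩ := h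
      exact ⟨a, rfl, fun b hb => .single (hpar a b₀ b hd hne hb.symm)⟩
    | tail _ h ih =>
      obtain ⟨a', c₀, ⟨hd, hne⟩, rfl, rfl⟩ := h
      obtain ⟨a, ha, hreach⟩ := ih
      exact ⟨a, ha, fun c hc => (hreach a' rfl).tail (hpar a' c₀ c hd hne hc.symm)⟩
  intro i hi
  obtain ⟨a, rfl, h⟩ := hreach _ _ hi
  obtain ⟨E, hE⟩ := hG.1
  exact hE.acyclic_dir a (h a rfl)

end IsMPDAG

def glue {ι : Type*} (G : PDAG V) (Es : ι → V → V → Prop) (a b : V) : Prop :=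
  G.dir a b ∨ ∃ i, Es i a b

variable {ι : Type*} {f : V → ι} {Es : ι → V → V → Prop} {a b c : V}

theorem glue_iff_of_eq (hrep : ∀ i, (G.induce {v | f v = i}).Represents (Es i))
    (hab : f a = f b) : G.glue Es a b ↔ Es (f a) a b := by
  refine ⟨?_, fun h => Or.inr ⟨_, h⟩⟩
  rintro (h | ⟨j, h⟩)
  · exact (hrep (f a)).2.2.1 a b ⟨rfl, hab.symm, h⟩
  · obtain ⟨rfl, -⟩ := (hrep j).mem_of_induce h
    exact h

theorem dir_of_glue_of_ne (hrep : ∀ i, (G.induce {v | f v = i}).Represents (Es i))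
    (h : G.glue Es a b) (hne : f a ≠ f b) : G.dir a b := by
  rcases h with h | ⟨j, h⟩
  · exact h
  · obtain ⟨ha, hb⟩ := (hrep j).mem_of_induce h
    exact absurd (ha.trans hb.symm) hne

theorem adjD_glue_iff (hf : ∀ a b, ReflTransGen G.undir a b → f a = f b)
    (hrep : ∀ i, (G.induce {v | f v = i}).Represents (Es i)) :
    adjD (G.glue Es) a b ↔ G.adj a b := by
  have hsub : ∀ a b, G.glue Es a b → G.adj a b := by
    rintro a b (h | ⟨j, h⟩)
    · exact Or.inl h
    · exact adj_of_induce_adj (((hrep j).2.1 a b).1 (Or.inl h))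
  refine ⟨fun h => h.elim (hsub a b) fun h => adj_comm.1 (hsub b a h), ?_⟩
  rintro (h | h | h)
  · exact Or.inl (Or.inl h)
  · exact Or.inr (Or.inl h)
  · have hab : f a = f b := hf a b (.single h)
    rcases ((hrep (f a)).2.1 a b).2 (Or.inr (Or.inr ⟨rfl, hab.symm, h⟩)) with h' | h'
    exacts [Or.inl (Or.inr ⟨_, h'⟩), Or.inr (Or.inr ⟨_, h'⟩)]

namespace IsMPDAG

theorem acyclic_glue (hG : G.IsMPDAG) (hf : ∀ a b, f a = f b ↔ ReflTransGen G.undir a b)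
    (hrep : ∀ i, (G.induce {v | f v = i}).Represents (Es i)) : Acyclic (G.glue Es) :=
  acyclic_of_acyclic_map f
    (fun i => (hrep i).1.mono fun _ _ ⟨h, ha, hb⟩ =>
      ha ▸ (glue_iff_of_eq hrep (ha.trans hb.symm)).1 h)
    ((hG.acyclic_map_dir hf).mono
      (Relation.map_mono fun _ _ ⟨h, hne⟩ => ⟨dir_of_glue_of_ne hrep h hne, hne⟩))

theorem dir_of_vStructD_glue (hG : G.IsMPDAG) (hf : ∀ a b, f a = f b ↔ ReflTransGen G.undir a b)
    (hrep : ∀ i, (G.induce {v | f v = i}).Represents (Es i))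
    (h : vStructD (G.glue Es) a b c) : G.dir a b := by
  obtain ⟨hab, hcb, hac, hnadj⟩ := h
  have hnadj' : ¬ G.adj a c := fun h => hnadj ((adjD_glue_iff (fun a b => (hf a b).2) hrep).2 h)
  by_cases hfab : f a = f b
  swap
  · exact dir_of_glue_of_ne hrep hab hfab
  by_cases hfcb : f c = f b
  · have hv : vStructD (Es (f b)) a b c :=
      ⟨hfab ▸ (glue_iff_of_eq hrep hfab).1 hab, hfcb ▸ (glue_iff_of_eq hrep hfcb).1 hcb, hac,
        fun h => hnadj' (adj_of_induce_adj (((hrep _).2.1 a c).1 h))⟩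
    exact (((hrep (f b)).2.2.2 a b c).1 hv).1.2.2
  · have hca : G.dir c a := hG.dir_of_dir_of_reflTransGen_undir
      (dir_of_glue_of_ne hrep hcb hfcb) (fun h => hfcb ((hf b c).2 h).symm) ((hf b a).1 hfab.symm)
    exact absurd (Or.inr (Or.inl hca)) hnadj'

theorem represents_glue (hG : G.IsMPDAG) (hf : ∀ a b, f a = f b ↔ ReflTransGen G.undir a b)
    (hrep : ∀ i, (G.induce {v | f v = i}).Represents (Es i)) : G.Represents (G.glue Es) := by
  have hskel : ∀ a b, adjD (G.glue Es) a b ↔ G.adj a b := fun a b =>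
    adjD_glue_iff (fun a b => (hf a b).2) hrep
  refine ⟨hG.acyclic_glue hf hrep, hskel, fun _ _ => Or.inl, fun a b c => ⟨fun h => ?_, ?_⟩⟩
  · exact ⟨hG.dir_of_vStructD_glue hf hrep h, hG.dir_of_vStructD_glue hf hrep h.symm, h.2.2.1,
      fun h' => h.2.2.2 ((hskel a c).2 h')⟩
  · rintro ⟨hab, hcb, hac, hnadj⟩
    exact ⟨Or.inl hab, Or.inl hcb, hac, fun h => hnadj ((hskel a c).1 h)⟩

end IsMPDAG

end PDAG

theorem stmt13_general {V : Type*} {ι : Type*} (G : PDAG V) (hG : G.IsMPDAG)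
    (W : ι → Set V) (hcomp : ∀ i, IsBComponent G (W i))
    (hpart : ∀ v, ∃! i, v ∈ W i)
    (Es : ι → (V → V → Prop))
    (hrep : ∀ i, (G.induce (W i)).Represents (Es i)) :
    ∃ E, G.Represents E ∧ ∀ i a b, a ∈ W i → b ∈ W i → (E a b ↔ Es i a b) := by
  choose f hf hfu using hpart
  have hW : W = fun i => {v | f v = i} :=
    funext fun i => Set.ext fun v => ⟨fun hv => (hfu v i hv).symm, fun hv => hv ▸ hf v⟩
  have hfib : ∀ a b, f a = f b ↔ ReflTransGen G.undir a b := fun a b => by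
    rw [(hcomp (f a)).reflTransGen_undir_iff (hf a), hW]
    exact eq_comm
  subst hW
  refine ⟨G.glue Es, hG.represents_glue hfib hrep, ?_⟩
  rintro i a b rfl hb
  exact PDAG.glue_iff_of_eq hrep hb.symm

/-- given an MPDAG `G*` with B-components over vertex sets `W i`, any
choice of DAGs `Es i ∈ [G*ᵢ]` for each B-component combines into a DAG `E ∈ [G*]`
whose induced subgraph over each `W i` equals `Es i`. -/
theorem stmt13 {V : Type*} {ι : Type*} (G : PDAG V) (hG : G.IsMPDAG)
    (W : ι → Set V) (hcomp : ∀ i, IsBComponent G (W i))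
    (hpart : ∀ v, ∃! i, v ∈ W i)
    (Es : ι → (V → V → Prop))
    (hmem : ∀ i a b, Es i a b → a ∈ W i ∧ b ∈ W i)
    (hrep : ∀ i, (G.induce (W i)).Represents (Es i)) :
    ∃ E, G.Represents E ∧ ∀ i a b, a ∈ W i → b ∈ W i → (E a b ↔ Es i a b) :=
  stmt13_general G hG W hcomp hpart Es hrep
end

section
/- Let G*₁ be an MPDAG with a B-component B₁₁ over vertex set V₁ containing an undirected edge X−Y. Let B₂₁ be the MPDAG over V₁ representing the DAGs of [B₁₁] with X→Y, and let G*₂ be obtained from G*₁ by replacing its induced subgraph over V₁ with B₂₁. Then G*₂ is exactly the MPDAG representing the DAGs of [G*₁] satisfying X→Y. -/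
/-!
If `W` is a B-component of an MPDAG `G`, re-orienting a DAG of `[G]` on `W` by any DAG of
`[G[W]]` gives again a DAG of `[G]`. For acyclicity, Meek's rule R1 together with the absence of
`w → p → u − w` in an MPDAG shows that a vertex outside `W` pointing into `W` points into every
vertex of `W`, so a cycle through `W` can be rerouted around `W` into a cycle of the old DAG. No
v-structure appears, because an unshielded collider with one undirected edge has both edges
undirected and so lies entirely inside or entirely outside `W`.

Hence, for an MPDAG `R` with `[R] ⊆ [G[W]]`, the graph obtained from `G` by putting `R` in place of
`G[W]` represents exactly the DAGs of `[G]` whose restriction to `W` lies in `[R]`, and gluing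
realizes each of its undirected edges in both directions.
-/

open Relation

section

variable {V : Type*} {G H R : PDAG V} {W : Set V} {E E' E₀ : V → V → Prop} {a b c p : V}

def induceRel (W : Set V) (E : V → V → Prop) : V → V → Prop := fun a b => a ∈ W ∧ b ∈ W ∧ E a b

theorem adjD_induceRel : adjD (induceRel W E) a b ↔ a ∈ W ∧ b ∈ W ∧ adjD E a b := by
  simp only [adjD, induceRel]
  tauto

theorem Relation.TransGen.induceRel_or_exists_notMem {r : V → V → Prop} {x y : V}
    (h : TransGen r x y) :
    TransGen (induceRel W r) x y ∨ ∃ z ∉ W, ReflTransGen r x z ∧ ReflTransGen r z y := by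
  induction h with
  | @single b hxb =>
    by_cases hx : x ∈ W
    · by_cases hb : b ∈ W
      · exact Or.inl (.single ⟨hx, hb, hxb⟩)
      · exact Or.inr ⟨b, hb, .single hxb, .refl⟩
    · exact Or.inr ⟨x, hx, .refl, .single hxb⟩
  | @tail b c hxb hbc ih =>
    rcases ih with ih | ⟨z, hz, hxz, hzb⟩
    · by_cases hb : b ∈ W
      · by_cases hc : c ∈ W
        · exact Or.inl (ih.tail ⟨hb, hc, hbc⟩)
        · exact Or.inr ⟨c, hc, (hxb.tail hbc).to_reflTransGen, .refl⟩
      · exact Or.inr ⟨b, hb, hxb.to_reflTransGen, .single hbc⟩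
    · exact Or.inr ⟨z, hz, hxz, hzb.tail hbc⟩

namespace PDAG

theorem adj_symm (h : G.adj a b) : G.adj b a := by
  rcases h with h | h | h
  exacts [Or.inr (Or.inl h), Or.inl h, Or.inr (Or.inr (G.undir_symm a b h))]

theorem induce_adj : (G.induce W).adj a b ↔ a ∈ W ∧ b ∈ W ∧ G.adj a b := by
  simp only [adj, induce]
  tauto

theorem induce_vStruct :
    (G.induce W).vStruct a b c ↔ a ∈ W ∧ b ∈ W ∧ c ∈ W ∧ G.vStruct a b c := by
  simp only [vStruct, induce_adj]
  constructor
  · rintro ⟨⟨ha, hb, hab⟩, ⟨hc, -, hcb⟩, hne, hac⟩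
    exact ⟨ha, hb, hc, hab, hcb, hne, fun h => hac ⟨ha, hc, h⟩⟩
  · rintro ⟨ha, hb, hc, hab, hcb, hne, hac⟩
    exact ⟨⟨ha, hb, hab⟩, ⟨hc, hb, hcb⟩, hne, fun h => hac h.2.2⟩

theorem Represents.extendsDir (h : G.Represents E) : ExtendsDir G E :=
  ⟨h.1, h.2.1, h.2.2.1⟩

theorem Represents.induce (h : G.Represents E) : (G.induce W).Represents (induceRel W E) := by
  obtain ⟨hacyc, hskel, hdir, hvs⟩ := h
  refine ⟨fun x hx => hacyc x (TransGen.mono (fun _ _ h => h.2.2) _ _ hx),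
    fun a b => ?_, fun a b h => ⟨h.1, h.2.1, hdir a b h.2.2⟩, fun a b c => ?_⟩
  · rw [adjD_induceRel, induce_adj, hskel]
  · rw [induce_vStruct, ← hvs]
    simp only [vStructD, induceRel, adjD_induceRel]
    tauto

end PDAG

theorem ExtendsDir.asymm (h : ExtendsDir G E) (hab : E a b) : ¬ E b a := fun hba =>
  h.1 a (.head hab (.single hba))

theorem ExtendsDir.dir_or_undir (h : ExtendsDir G E) (hab : E a b) : G.dir a b ∨ G.undir a b := by
  rcases (h.2.1 a b).1 (Or.inl hab) with hd | hd | hu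
  · exact Or.inl hd
  · exact absurd (h.2.2 b a hd) (h.asymm hab)
  · exact Or.inr hu

theorem ExtendsNoNewV.represents (h : ExtendsNoNewV G E) : G.Represents E :=
  ⟨h.1, h.2.1, h.2.2.1, fun a b c => ⟨h.2.2.2 a b c, fun ⟨hab, hcb, hne, hac⟩ =>
    ⟨h.2.2.1 a b hab, h.2.2.1 c b hcb, hne, fun h' => hac ((h.2.1 a c).1 h')⟩⟩⟩

namespace PDAG

theorem represents_iff_of_dir_le (hadj : ∀ a b, H.adj a b ↔ G.adj a b)
    (hdir : ∀ a b, G.dir a b → H.dir a b) (hE₀ : G.Represents E₀)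
    (hHE₀ : ∀ a b, H.dir a b → E₀ a b) :
    H.Represents E ↔ G.Represents E ∧ ∀ a b, H.dir a b → E a b := by
  have hvs : ∀ a b c, H.vStruct a b c ↔ G.vStruct a b c := by
    intro a b c
    constructor
    · rintro ⟨hab, hcb, hne, hac⟩
      rw [hadj] at hac
      exact (hE₀.2.2.2 a b c).1
        ⟨hHE₀ a b hab, hHE₀ c b hcb, hne, fun h => hac ((hE₀.2.1 a c).1 h)⟩
    · rintro ⟨hab, hcb, hne, hac⟩
      exact ⟨hdir a b hab, hdir c b hcb, hne, by rwa [hadj]⟩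
  constructor
  · rintro ⟨hacyc, hskel, hHdir, hHvs⟩
    exact ⟨⟨hacyc, fun a b => (hskel a b).trans (hadj a b), fun a b h => hHdir a b (hdir a b h),
      fun a b c => (hHvs a b c).trans (hvs a b c)⟩, hHdir⟩
  · rintro ⟨⟨hacyc, hskel, -, hGvs⟩, hHdir⟩
    exact ⟨hacyc, fun a b => (hskel a b).trans (hadj a b).symm, hHdir,
      fun a b c => (hGvs a b c).trans (hvs a b c).symm⟩

theorem isMPDAG_of_undir (hne : ∃ E, G.Represents E)
    (hundir : ∀ a b, G.undir a b → ∃ E, G.Represents E ∧ E a b) : G.IsMPDAG := by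
  refine ⟨hne, fun a b => ⟨fun h => ⟨Or.inl h, fun E hE => hE.2.2.1 a b h⟩, ?_⟩, hundir⟩
  rintro ⟨hd | hd | hu, hall⟩
  · exact hd
  · obtain ⟨E, hE⟩ := hne
    exact absurd (hE.2.2.1 b a hd) (hE.extendsDir.asymm (hall E hE))
  · obtain ⟨E, hE, hba⟩ := hundir b a (G.undir_symm a b hu)
    exact absurd hba (hE.extendsDir.asymm (hall E hE))

theorem IsMPDAG.adj_of_dir_of_undir_s16 (hG : G.IsMPDAG) (hcb : G.dir c b) (hba : G.undir b a)
    (hca : c ≠ a) : G.adj c a := by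
  by_contra hac
  obtain ⟨E, hE, hab⟩ := hG.2.2 a b (G.undir_symm b a hba)
  have hv : G.vStruct c b a := (hE.2.2.2 c b a).1
    ⟨hE.2.2.1 c b hcb, hab, hca, fun h => hac ((hE.2.1 c a).1 h)⟩
  exact G.disj a b (G.undir_symm b a hba) hv.2.1

theorem IsMPDAG.not_dir_of_dir_of_undir (hG : G.IsMPDAG) (hpa : G.dir p a) (hab : G.undir a b) :
    ¬ G.dir b p := fun hbp => by
  obtain ⟨E, hE, hab'⟩ := hG.2.2 a b hab
  exact hE.1 a (.head hab' (.head (hE.2.2.1 b p hbp) (.single (hE.2.2.1 p a hpa))))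

theorem IsMPDAG.adj_iff_of_subset (hR : R.IsMPDAG) (hRG : ∀ E, R.Represents E → G.Represents E) :
    R.adj a b ↔ G.adj a b := by
  obtain ⟨E₀, hE₀⟩ := hR.1
  exact (hE₀.2.1 a b).symm.trans ((hRG E₀ hE₀).2.1 a b)

theorem IsMPDAG.dir_of_subset (hR : R.IsMPDAG) (hRG : ∀ E, R.Represents E → G.Represents E)
    (h : G.dir a b) : R.dir a b :=
  (hR.2.1 a b).2 ⟨(hR.adj_iff_of_subset hRG).2 (Or.inl h), fun E hE => (hRG E hE).2.2.1 a b h⟩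

theorem IsMPDAG.represents_iff_of_subset (hR : R.IsMPDAG)
    (hRG : ∀ E, R.Represents E → G.Represents E) :
    R.Represents E ↔ G.Represents E ∧ ∀ a b, R.dir a b → E a b := by
  obtain ⟨E₀, hE₀⟩ := hR.1
  exact represents_iff_of_dir_le (fun _ _ => hR.adj_iff_of_subset hRG)
    (fun _ _ => hR.dir_of_subset hRG) (hRG E₀ hE₀) hE₀.2.2.1

end PDAG

theorem IsBComponent.mem_iff_of_undir (hW : IsBComponent G W) (h : G.undir a b) :
    a ∈ W ↔ b ∈ W := by
  obtain ⟨x, rfl⟩ := hW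
  exact ⟨fun ha => ReflTransGen.tail ha h, fun hb => ReflTransGen.tail hb (G.undir_symm a b h)⟩

theorem IsBComponent.reflTransGen_undir (hW : IsBComponent G W) (ha : a ∈ W) (hb : b ∈ W) :
    ReflTransGen G.undir a b := by
  obtain ⟨x, rfl⟩ := hW
  have : Std.Symm G.undir := ⟨G.undir_symm⟩
  exact (Std.Symm.symm _ _ ha).trans hb

theorem IsBComponent.dir_of_dir (hW : IsBComponent G W) (hG : G.IsMPDAG) (hp : p ∉ W)
    (hpa : G.dir p a) (ha : a ∈ W) (hb : b ∈ W) : G.dir p b := by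
  induction hW.reflTransGen_undir ha hb with
  | refl => exact hpa
  | @tail u w _ huw ih =>
    have hu : u ∈ W := (hW.mem_iff_of_undir huw).2 hb
    rcases hG.adj_of_dir_of_undir_s16 (ih hu) huw (fun h => hp (h ▸ hb)) with h | h | h
    · exact h
    · exact absurd h (hG.not_dir_of_dir_of_undir (ih hu) huw)
    · exact absurd ((hW.mem_iff_of_undir h).2 hb) hp

theorem IsBComponent.dir_of_extendsDir (hW : IsBComponent G W) (hE : ExtendsDir G E)
    (hab : E a b) (ha : a ∉ W) (hb : b ∈ W) : G.dir a b :=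
  (hE.dir_or_undir hab).resolve_right fun hu => ha ((hW.mem_iff_of_undir hu).2 hb)

open Classical in
def glue (W : Set V) (E' E : V → V → Prop) : V → V → Prop :=
  fun a b => if a ∈ W ∧ b ∈ W then E' a b else E a b

theorem glue_of_mem (ha : a ∈ W) (hb : b ∈ W) : glue W E' E a b = E' a b :=
  if_pos ⟨ha, hb⟩

theorem glue_of_notMem (h : ¬ (a ∈ W ∧ b ∈ W)) : glue W E' E a b = E a b :=
  if_neg h

theorem adjD_glue (hE' : (G.induce W).Represents E') (hE : G.Represents E) :
    adjD (glue W E' E) a b ↔ G.adj a b := by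
  by_cases h : a ∈ W ∧ b ∈ W
  · rw [adjD, glue_of_mem h.1 h.2, glue_of_mem h.2 h.1]
    exact (hE'.2.1 a b).trans (by rw [PDAG.induce_adj]; simp [h.1, h.2])
  · rw [adjD, glue_of_notMem h, glue_of_notMem fun h' => h ⟨h'.2, h'.1⟩]
    exact hE.2.1 a b

theorem glue_of_dir (hE' : (G.induce W).Represents E') (hE : G.Represents E) (h : G.dir a b) :
    glue W E' E a b := by
  by_cases hab : a ∈ W ∧ b ∈ W
  · rw [glue_of_mem hab.1 hab.2]
    exact hE'.2.2.1 a b ⟨hab.1, hab.2, h⟩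
  · rw [glue_of_notMem hab]
    exact hE.2.2.1 a b h

/-- The second conjunct is the invariant that lets the path pass through `W`: by
`IsBComponent.dir_of_dir`, a parent outside `W` of one vertex of `W` is a parent of all of them. -/
theorem transGen_of_transGen_glue (hG : G.IsMPDAG) (hW : IsBComponent G W)
    (hE : G.Represents E) (ha : a ∉ W) (h : TransGen (glue W E' E) a b) :
    TransGen E a b ∧ (b ∈ W → ∃ p ∉ W, ReflTransGen E a p ∧ G.dir p b) := by
  induction h with
  | @single b hab =>
    rw [glue_of_notMem fun h => ha h.1] at hab
    exact ⟨.single hab, fun hb => ⟨a, ha, .refl, hW.dir_of_extendsDir hE.extendsDir hab ha hb⟩⟩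
  | @tail b c _ hbc ih =>
    by_cases hbcW : b ∈ W ∧ c ∈ W
    · obtain ⟨p, hp, hap, hpb⟩ := ih.2 hbcW.1
      have hpc := hW.dir_of_dir hG hp hpb hbcW.1 hbcW.2
      exact ⟨.tail' hap (hE.2.2.1 p c hpc), fun _ => ⟨p, hp, hap, hpc⟩⟩
    · rw [glue_of_notMem hbcW] at hbc
      refine ⟨ih.1.tail hbc, fun hc => ?_⟩
      have hb : b ∉ W := fun hb => hbcW ⟨hb, hc⟩
      exact ⟨b, hb, ih.1.to_reflTransGen, hW.dir_of_extendsDir hE.extendsDir hbc hb hc⟩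

theorem acyclic_glue (hG : G.IsMPDAG) (hW : IsBComponent G W)
    (hE' : (G.induce W).Represents E') (hE : G.Represents E) : Acyclic (glue W E' E) := by
  intro x hx
  rcases hx.induceRel_or_exists_notMem (W := W) with hxW | ⟨z, hz, hxz, hzx⟩
  · refine hE'.1 x (TransGen.mono (fun a b ⟨ha, hb, hab⟩ => ?_) _ _ hxW)
    rwa [glue_of_mem ha hb] at hab
  · exact hE.1 z (transGen_of_transGen_glue hG hW hE hz (.trans_right hzx (hx.trans_left hxz))).1

/-- If one edge of the collider is undirected in `G`, Meek's rule R1 makes the other one undirected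
as well, so the whole collider lies outside `W`. -/
theorem glue_of_collider (hG : G.IsMPDAG) (hW : IsBComponent G W) (hE : G.Represents E)
    (hglue : ExtendsDir G (glue W E' E)) (hab : glue W E' E a b) (hcb : glue W E' E c b)
    (hne : a ≠ c) (hac : ¬ G.adj a c) (hout : ¬ (a ∈ W ∧ b ∈ W ∧ c ∈ W)) : E a b := by
  rcases hglue.dir_or_undir hab with hd | hu
  · exact hE.2.2.1 a b hd
  · have hcb' : G.undir c b := (hglue.dir_or_undir hcb).resolve_left fun hd =>
      hac (G.adj_symm (hG.adj_of_dir_of_undir_s16 hd (G.undir_symm a b hu) hne.symm))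
    have hb : b ∉ W := fun hb =>
      hout ⟨(hW.mem_iff_of_undir hu).2 hb, hb, (hW.mem_iff_of_undir hcb').2 hb⟩
    rwa [glue_of_notMem fun h => hb h.2] at hab

theorem glue_represents (hG : G.IsMPDAG) (hW : IsBComponent G W)
    (hE' : (G.induce W).Represents E') (hE : G.Represents E) : G.Represents (glue W E' E) := by
  have hglue : ExtendsDir G (glue W E' E) :=
    ⟨acyclic_glue hG hW hE' hE, fun _ _ => adjD_glue hE' hE, fun _ _ => glue_of_dir hE' hE⟩
  refine ExtendsNoNewV.represents ⟨hglue.1, hglue.2.1, hglue.2.2, ?_⟩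
  rintro a b c ⟨hab, hcb, hne, hn⟩
  have hac : ¬ G.adj a c := fun h => hn ((hglue.2.1 a c).2 h)
  by_cases hin : a ∈ W ∧ b ∈ W ∧ c ∈ W
  · obtain ⟨ha, hb, hc⟩ := hin
    rw [glue_of_mem ha hb] at hab
    rw [glue_of_mem hc hb] at hcb
    have hv := (hE'.2.2.2 a b c).1
      ⟨hab, hcb, hne, fun h => hac (PDAG.induce_adj.1 ((hE'.2.1 a c).1 h)).2.2⟩
    exact (PDAG.induce_vStruct.1 hv).2.2.2
  · refine (hE.2.2.2 a b c).1 ⟨glue_of_collider hG hW hE hglue hab hcb hne hac hin,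
      glue_of_collider hG hW hE hglue hcb hab hne.symm (fun h => hac (G.adj_symm h))
        (fun h => hin ⟨h.2.2, h.2.1, h.1⟩), hne, fun h => hac ((hE.2.1 a c).1 h)⟩

def IsReplacement (G : PDAG V) (W : Set V) (R H : PDAG V) : Prop :=
  (∀ a b, a ∈ W → b ∈ W → ((H.dir a b ↔ R.dir a b) ∧ (H.undir a b ↔ R.undir a b))) ∧
  (∀ a b, ¬ (a ∈ W ∧ b ∈ W) → ((H.dir a b ↔ G.dir a b) ∧ (H.undir a b ↔ G.undir a b)))

theorem IsReplacement.adj_iff (hH : IsReplacement G W R H)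
    (hR : ∀ a b, R.adj a b ↔ (G.induce W).adj a b) : H.adj a b ↔ G.adj a b := by
  by_cases h : a ∈ W ∧ b ∈ W
  · have hab := hH.1 a b h.1 h.2
    have hba := hH.1 b a h.2 h.1
    calc H.adj a b ↔ R.adj a b := by unfold PDAG.adj; rw [hab.1, hba.1, hab.2]
      _ ↔ G.adj a b := by rw [hR, PDAG.induce_adj]; simp [h.1, h.2]
  · have hab := hH.2 a b h
    have hba := hH.2 b a fun h' => h ⟨h'.2, h'.1⟩
    unfold PDAG.adj
    rw [hab.1, hba.1, hab.2]

theorem IsReplacement.dir_of_dir (hH : IsReplacement G W R H)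
    (hR : ∀ a b, (G.induce W).dir a b → R.dir a b) (h : G.dir a b) : H.dir a b := by
  by_cases hab : a ∈ W ∧ b ∈ W
  · exact (hH.1 a b hab.1 hab.2).1.2 (hR a b ⟨hab.1, hab.2, h⟩)
  · exact (hH.2 a b hab).1.2 h

theorem IsReplacement.dir_cases (hH : IsReplacement G W R H) (h : H.dir a b) :
    (a ∈ W ∧ b ∈ W ∧ R.dir a b) ∨ (¬ (a ∈ W ∧ b ∈ W) ∧ G.dir a b) := by
  by_cases hab : a ∈ W ∧ b ∈ W
  · exact Or.inl ⟨hab.1, hab.2, (hH.1 a b hab.1 hab.2).1.1 h⟩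
  · exact Or.inr ⟨hab, (hH.2 a b hab).1.1 h⟩

theorem IsReplacement.undir_cases (hH : IsReplacement G W R H) (h : H.undir a b) :
    (a ∈ W ∧ b ∈ W ∧ R.undir a b) ∨ (¬ (a ∈ W ∧ b ∈ W) ∧ G.undir a b) := by
  by_cases hab : a ∈ W ∧ b ∈ W
  · exact Or.inl ⟨hab.1, hab.2, (hH.1 a b hab.1 hab.2).2.1 h⟩
  · exact Or.inr ⟨hab, (hH.2 a b hab).2.1 h⟩

theorem IsReplacement.glue_of_dir (hH : IsReplacement G W R H) (hE' : R.Represents E')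
    (hE : G.Represents E) (h : H.dir a b) : glue W E' E a b := by
  rcases hH.dir_cases h with ⟨ha, hb, hd⟩ | ⟨hab, hd⟩
  · rw [glue_of_mem ha hb]
    exact hE'.2.2.1 a b hd
  · rw [glue_of_notMem hab]
    exact hE.2.2.1 a b hd

theorem IsReplacement.represents_iff_forall_dir (hH : IsReplacement G W R H) (hG : G.IsMPDAG)
    (hW : IsBComponent G W) (hR : R.IsMPDAG)
    (hRG : ∀ E, R.Represents E → (G.induce W).Represents E) :
    H.Represents E ↔ G.Represents E ∧ ∀ a b, H.dir a b → E a b := by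
  obtain ⟨E₀, hE₀⟩ := hR.1
  obtain ⟨E₁, hE₁⟩ := hG.1
  exact PDAG.represents_iff_of_dir_le (fun _ _ => hH.adj_iff fun _ _ => hR.adj_iff_of_subset hRG)
    (fun _ _ => hH.dir_of_dir fun _ _ => hR.dir_of_subset hRG)
    (glue_represents hG hW (hRG E₀ hE₀) hE₁) (fun _ _ => hH.glue_of_dir hE₀ hE₁)

theorem IsReplacement.represents_glue (hH : IsReplacement G W R H) (hG : G.IsMPDAG)
    (hW : IsBComponent G W) (hR : R.IsMPDAG)
    (hRG : ∀ E, R.Represents E → (G.induce W).Represents E)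
    (hE' : R.Represents E') (hE : G.Represents E) :
    H.Represents (glue W E' E) :=
  (hH.represents_iff_forall_dir hG hW hR hRG).2
    ⟨glue_represents hG hW (hRG E' hE') hE, fun _ _ => hH.glue_of_dir hE' hE⟩

theorem IsReplacement.isMPDAG (hH : IsReplacement G W R H) (hG : G.IsMPDAG)
    (hW : IsBComponent G W) (hR : R.IsMPDAG)
    (hRG : ∀ E, R.Represents E → (G.induce W).Represents E) :
    H.IsMPDAG := by
  obtain ⟨E₀, hE₀⟩ := hR.1
  obtain ⟨E₁, hE₁⟩ := hG.1
  refine PDAG.isMPDAG_of_undir ⟨_, hH.represents_glue hG hW hR hRG hE₀ hE₁⟩ fun a b hu => ?_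
  rcases hH.undir_cases hu with ⟨ha, hb, hu⟩ | ⟨hab, hu⟩
  · obtain ⟨E', hE', h⟩ := hR.2.2 a b hu
    exact ⟨_, hH.represents_glue hG hW hR hRG hE' hE₁, by rwa [glue_of_mem ha hb]⟩
  · obtain ⟨E, hE, h⟩ := hG.2.2 a b hu
    exact ⟨_, hH.represents_glue hG hW hR hRG hE₀ hE, by rwa [glue_of_notMem hab]⟩

theorem IsReplacement.represents_iff (hH : IsReplacement G W R H) (hG : G.IsMPDAG)
    (hW : IsBComponent G W) (hR : R.IsMPDAG)
    (hRG : ∀ E, R.Represents E → (G.induce W).Represents E) :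
    H.Represents E ↔ G.Represents E ∧ R.Represents (induceRel W E) := by
  rw [hH.represents_iff_forall_dir hG hW hR hRG, hR.represents_iff_of_subset hRG]
  constructor
  · rintro ⟨hE, hHE⟩
    refine ⟨hE, hE.induce, fun a b h => ?_⟩
    obtain ⟨ha, hb, -⟩ := PDAG.induce_adj.1 ((hR.adj_iff_of_subset hRG).1 (Or.inl h))
    exact ⟨ha, hb, hHE a b ((hH.1 a b ha hb).1.2 h)⟩
  · rintro ⟨hE, -, hRE⟩
    refine ⟨hE, fun a b h => ?_⟩
    rcases hH.dir_cases h with ⟨-, -, hd⟩ | ⟨-, hd⟩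
    exacts [(hRE a b hd).2.2, hE.2.2.1 a b hd]

end

theorem stmt16_general {V : Type*} (G1 B21 G2 : PDAG V) (hG1 : G1.IsMPDAG)
    (V1 : Set V) (h1 : IsBComponent G1 V1)
    (X Y : V) (hX : X ∈ V1) (hY : Y ∈ V1)
    (hB21m : B21.IsMPDAG)
    (hB21 : ∀ E, B21.Represents E ↔ ((G1.induce V1).Represents E ∧ E X Y))
    (hin : ∀ a b, a ∈ V1 → b ∈ V1 →
      ((G2.dir a b ↔ B21.dir a b) ∧ (G2.undir a b ↔ B21.undir a b)))
    (hout : ∀ a b, ¬ (a ∈ V1 ∧ b ∈ V1) →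
      ((G2.dir a b ↔ G1.dir a b) ∧ (G2.undir a b ↔ G1.undir a b))) :
    G2.IsMPDAG ∧ ∀ E, G2.Represents E ↔ (G1.Represents E ∧ E X Y) := by
  have hRG : ∀ E, B21.Represents E → (G1.induce V1).Represents E := fun E hE => ((hB21 E).1 hE).1
  have hH : IsReplacement G1 V1 B21 G2 := ⟨hin, hout⟩
  refine ⟨hH.isMPDAG hG1 h1 hB21m hRG, fun E => (hH.represents_iff hG1 h1 hB21m hRG).trans ?_⟩
  rw [hB21]
  exact ⟨fun ⟨hE, _, hXY⟩ => ⟨hE, hXY.2.2⟩, fun ⟨hE, hXY⟩ => ⟨hE, hE.induce, hX, hY, hXY⟩⟩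

/-- replacing the induced subgraph of an MPDAG `G*₁` over the vertex set
`V₁` of a B-component containing `X − Y` by the MPDAG `B₂₁` of `[B₁₁]` restricted by
`X → Y` yields exactly the MPDAG representing the DAGs of `[G*₁]` satisfying `X → Y`. -/
theorem stmt16 {V : Type*} (G1 B21 G2 : PDAG V) (hG1 : G1.IsMPDAG)
    (V1 : Set V) (h1 : IsBComponent G1 V1)
    (X Y : V) (hX : X ∈ V1) (hY : Y ∈ V1) (hXY : G1.undir X Y)
    (hB21m : B21.IsMPDAG)
    (hB21 : ∀ E, B21.Represents E ↔ ((G1.induce V1).Represents E ∧ E X Y))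
    (hin : ∀ a b, a ∈ V1 → b ∈ V1 →
      ((G2.dir a b ↔ B21.dir a b) ∧ (G2.undir a b ↔ B21.undir a b)))
    (hout : ∀ a b, ¬ (a ∈ V1 ∧ b ∈ V1) →
      ((G2.dir a b ↔ G1.dir a b) ∧ (G2.undir a b ↔ G1.undir a b))) :
    G2.IsMPDAG ∧ ∀ E, G2.Represents E ↔ (G1.Represents E ∧ E X Y) :=
  stmt16_general G1 B21 G2 hG1 V1 h1 X Y hX hY hB21m hB21 hin hout
end
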